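/- arXiv:0801.1981 — 2 statements merged into one kernel-verified Lean document; each statement's English description precedes it below -/
import Mathlib

section
/- The map h/k ↦ (k-h)/h is an order-reversing bijection from the right halfsequence F^{≥1/2}(B(2m), m) onto the Farey sequence F_m, with inverse h/k ↦ k/(k+h). -/
/-- The Farey sequence of order `m`: rationals in `[0,1]` with denominator at most `m`. -/
def Farey (m : ℕ) : Set ℚ := {q | 0 ≤ q ∧ q ≤ 1 ∧ q.den ≤ m}

/-- The Farey subsequence `F(B(2m), m)`: fractions `h/k` in lowest terms with
`0 ≤ h/k ≤ 1`, `k ≤ 2m` and `k - m ≤ h ≤ m`. -/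
def FareyB (m : ℕ) : Set ℚ :=
  {q | 0 ≤ q ∧ q ≤ 1 ∧ q.den ≤ 2 * m ∧ (q.den : ℤ) - m ≤ q.num ∧ q.num ≤ m}

/-- The left halfsequence `F^{≤1/2}(B(2m), m)`. -/
def FareyBLeft (m : ℕ) : Set ℚ := {q ∈ FareyB m | q ≤ 1/2}

/-- The right halfsequence `F^{≥1/2}(B(2m), m)`. -/
def FareyBRight (m : ℕ) : Set ℚ := {q ∈ FareyB m | 1/2 ≤ q}

/-!
Writing `q = h/k` in lowest terms with `q > 0`, the fraction `(1 - q)/q = q⁻¹ - 1` is `(k - h)/h`,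
again in lowest terms, so its denominator is `h`; conversely `1/(1 + r)` for `r = h/k ≥ 0` is
`k/(k + h)` in lowest terms. Thus `h ≤ m` translates into the denominator bound of `F_m`, and the
bounds `k ≤ 2m`, `k - m ≤ h ≤ m` of `F(B(2m), m)` are exactly what `k + h ≤ 2m`, `h ≤ k ≤ m` give.
The two maps are mutually inverse on the positive rationals, and `q ↦ q⁻¹ - 1` is decreasing.
-/

namespace Rat

theorem num_inv_of_pos {q : ℚ} (hq : 0 < q) : q⁻¹.num = q.den := by
  simp [num_inv, Int.sign_eq_one_of_pos (num_pos.mpr hq)]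

theorem den_inv_of_pos {q : ℚ} (hq : 0 < q) : (q⁻¹.den : ℤ) = q.num := by
  rw [den_inv_of_ne_zero hq.ne', Int.natAbs_of_nonneg (num_nonneg.mpr hq.le)]

theorem num_one_add (q : ℚ) : (1 + q).num = q.num + q.den := by
  have h := mul_den_eq_num (1 + q)
  rw [show (1 + q).den = q.den by simp, add_mul, mul_den_eq_num, one_mul] at h
  exact_mod_cast h.symm.trans (add_comm _ _)

theorem den_one_sub_div_self {q : ℚ} (hq : 0 < q) : (((1 - q) / q).den : ℤ) = q.num := by
  rw [sub_div, div_self hq.ne', one_div, ← den_inv_of_pos hq]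
  simp

theorem num_one_div_one_add {r : ℚ} (hr : 0 ≤ r) : (1 / (1 + r)).num = r.den := by
  rw [one_div, num_inv_of_pos (by positivity)]
  simp

theorem den_one_div_one_add {r : ℚ} (hr : 0 ≤ r) :
    ((1 / (1 + r)).den : ℤ) = r.num + r.den := by
  rw [one_div, den_inv_of_pos (by positivity), num_one_add]

end Rat

theorem strictAntiOn_one_sub_div_self :
    StrictAntiOn (fun q : ℚ => (1 - q) / q) (Set.Ioi 0) := by
  intro a (ha : 0 < a) b (hb : 0 < b) hab
  dsimp only
  rw [div_lt_div_iff₀ hb ha]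
  nlinarith

theorem invOn_one_div_one_add_one_sub_div_self :
    Set.InvOn (fun q : ℚ => 1 / (1 + q)) (fun q : ℚ => (1 - q) / q) (Set.Ioi 0) (Set.Ici 0) := by
  constructor
  · intro q (hq : 0 < q)
    field_simp
    ring
  · intro r (hr : 0 ≤ r)
    have : 1 + r ≠ 0 := by positivity
    field_simp
    ring

theorem fareyBRight_subset_Ioi (m : ℕ) : FareyBRight m ⊆ Set.Ioi 0 :=
  fun _ ⟨_, hq⟩ => lt_of_lt_of_le (by norm_num) hq

theorem farey_subset_Ici (m : ℕ) : Farey m ⊆ Set.Ici 0 :=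
  fun _ ⟨hr, _⟩ => hr

theorem mapsTo_fareyBRight_farey (m : ℕ) :
    Set.MapsTo (fun q : ℚ => (1 - q) / q) (FareyBRight m) (Farey m) := by
  rintro q ⟨⟨-, hq1, -, -, hnum⟩, hhalf⟩
  have hq : 0 < q := lt_of_lt_of_le (by norm_num) hhalf
  refine ⟨div_nonneg (by linarith) hq.le, (div_le_one hq).mpr (by linarith), ?_⟩
  have := Rat.den_one_sub_div_self hq
  dsimp only
  omega

theorem mapsTo_farey_fareyBRight (m : ℕ) :
    Set.MapsTo (fun q : ℚ => 1 / (1 + q)) (Farey m) (FareyBRight m) := by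
  rintro r ⟨hr0, hr1, hden⟩
  have hpos : 0 < 1 + r := by linarith
  have hnum_le_den := Rat.num_le_denom_iff.mpr hr1
  have hnum := Rat.num_one_div_one_add hr0
  have hden' := Rat.den_one_div_one_add hr0
  refine ⟨⟨by positivity, (div_le_one hpos).mpr (by linarith), ?_, ?_, ?_⟩, ?_⟩ <;> dsimp only
  · omega
  · omega
  · omega
  · rw [le_div_iff₀ hpos]; linarith

theorem fareyBRight_to_farey_reversing_general (m : ℕ) :
    Set.BijOn (fun q : ℚ => (1 - q) / q) (FareyBRight m) (Farey m) ∧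
      StrictAntiOn (fun q : ℚ => (1 - q) / q) (FareyBRight m) ∧
      Set.InvOn (fun q : ℚ => 1 / (1 + q)) (fun q : ℚ => (1 - q) / q)
        (FareyBRight m) (Farey m) := by
  have hinv := invOn_one_div_one_add_one_sub_div_self.mono
    (fareyBRight_subset_Ioi m) (farey_subset_Ici m)
  exact ⟨hinv.bijOn (mapsTo_fareyBRight_farey m) (mapsTo_farey_fareyBRight m),
    strictAntiOn_one_sub_div_self.mono (fareyBRight_subset_Ioi m), hinv⟩

/-- The map `h/k ↦ (k-h)/h`, i.e. `q ↦ (1-q)/q`, is an order-reversing bijection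
from the right halfsequence `F^{≥1/2}(B(2m), m)` onto `F_m`,
with inverse `h/k ↦ k/(k+h)`, i.e. `q ↦ 1/(1+q)`. -/
theorem fareyBRight_to_farey_reversing (m : ℕ) (hm : 1 < m) :
    Set.BijOn (fun q : ℚ => (1 - q) / q) (FareyBRight m) (Farey m) ∧
      StrictAntiOn (fun q : ℚ => (1 - q) / q) (FareyBRight m) ∧
      Set.InvOn (fun q : ℚ => 1 / (1 + q)) (fun q : ℚ => (1 - q) / q)
        (FareyBRight m) (Farey m) :=
  fareyBRight_to_farey_reversing_general m
end

section
/- If 2/j ∈ F_m (j odd, 2 < j ≤ m), then the immediate successor of 2/j in F_m is (⌈2(m+1)/j⌉-1) / ((j(⌈2(m+1)/j⌉-1)-1)/2) when ⌈2(m+1)/j⌉ is even, and (⌈2(m+1)/j⌉-2) / ((j(⌈2(m+1)/j⌉-2)-1)/2) when ⌈2(m+1)/j⌉ is odd. -/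
/-! Let `p` be the largest odd integer below `c = ⌈2(m+1)/j⌉`. As `j` is odd, `jp = 2q + 1`, so
`jp - 2q = 1`: `2/j < p/q` are Farey neighbours. The choice of `c` gives `q ≤ m < q + j`, while any
fraction strictly between two Farey neighbours has denominator at least the sum of theirs. -/

lemma add_le_of_mul_sub_mul_eq_one {a b c d x y : ℤ} (hb : 0 < b) (hd : 0 < d)
    (hdet : b * c - a * d = 1) (hax : a * y < x * b) (hxc : x * d < c * y) : b + d ≤ y := by
  -- `y = y (bc - ad)`, and both brackets below are at least `1`.
  have hy : y = b * (c * y - x * d) + d * (x * b - a * y) := by linear_combination -y * hdet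
  nlinarith

lemma Rat.add_le_den_of_lt_of_lt {a b c d : ℤ} (hb : 0 < b) (hd : 0 < d)
    (hdet : b * c - a * d = 1) {r : ℚ} (har : (a : ℚ) / b < r) (hrc : r < (c : ℚ) / d) :
    b + d ≤ r.den := by
  have hb' : (0 : ℚ) < b := by exact_mod_cast hb
  have hd' : (0 : ℚ) < d := by exact_mod_cast hd
  have hr' : (0 : ℚ) < r.den := by exact_mod_cast r.pos
  rw [← Rat.num_div_den r] at har hrc
  rw [div_lt_div_iff₀ hb' hr'] at har
  rw [div_lt_div_iff₀ hr' hd'] at hrc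
  exact add_le_of_mul_sub_mul_eq_one hb hd hdet (by exact_mod_cast har) (by exact_mod_cast hrc)

lemma intCast_div_mem_farey {m : ℕ} {c d : ℤ} (hc : 0 ≤ c) (hd : 0 < d) (hcd : c ≤ d)
    (hdm : d ≤ m) : (c : ℚ) / d ∈ Farey m := by
  have hd' : (0 : ℚ) < d := by exact_mod_cast hd
  refine ⟨by positivity, (div_le_one hd').2 (by exact_mod_cast hcd), ?_⟩
  have hden : (((c : ℚ) / d).den : ℤ) ≤ d :=
    Int.le_of_dvd hd (by simpa only [Rat.divInt_eq_div] using Rat.den_dvd c d)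
  exact_mod_cast hden.trans hdm

lemma isLeast_farey_gt {m : ℕ} {a b c d : ℤ} (hb : 0 < b) (hc : 0 ≤ c) (hd : 0 < d)
    (hcd : c ≤ d) (hdm : d ≤ m) (hbdm : m < b + d) (hdet : b * c - a * d = 1) :
    IsLeast {r | r ∈ Farey m ∧ (a : ℚ) / b < r} ((c : ℚ) / d) := by
  have hb' : (0 : ℚ) < b := by exact_mod_cast hb
  have hd' : (0 : ℚ) < d := by exact_mod_cast hd
  refine ⟨⟨intCast_div_mem_farey hc hd hcd hdm, ?_⟩, ?_⟩
  · rw [div_lt_div_iff₀ hb' hd']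
    exact_mod_cast (by linarith : a * d < c * b)
  rintro r ⟨⟨-, -, hrm⟩, har⟩
  by_contra! hrc
  have := Rat.add_le_den_of_lt_of_lt hb hd hdet har hrc
  omega

lemma mul_ceil_div_bounds {K : Type*} [Field K] [LinearOrder K] [IsStrictOrderedRing K]
    [FloorRing K] (x : K) {k : K} (hk : 0 < k) : k * (⌈x / k⌉ - 1) < x ∧ x ≤ k * ⌈x / k⌉ :=
  ⟨by simpa [lt_div_iff₀' hk] using Int.lt_ceil.1 (sub_one_lt ⌈x / k⌉),
    (div_le_iff₀' hk).1 (Int.le_ceil _)⟩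

lemma Int.odd_ite_even_sub (c : ℤ) : Odd (if Even c then c - 1 else c - 2) := by
  split_ifs with h
  · exact h.sub_odd odd_one
  · exact (Int.not_even_iff_odd.1 h).sub_even even_two

theorem farey_succ_two_div_general (m j : ℕ) (hj : 2 < j) (hjm : j ≤ m) (hodd : Odd j) :
    (let c : ℤ := ⌈(2 * ((m : ℚ) + 1)) / j⌉
     let s : ℚ := if Even c then ((c : ℚ) - 1) / (((j : ℚ) * ((c : ℚ) - 1) - 1) / 2)
                  else ((c : ℚ) - 2) / (((j : ℚ) * ((c : ℚ) - 2) - 1) / 2)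
     s ∈ Farey m ∧ 2 / (j : ℚ) < s ∧
       ∀ r ∈ Farey m, 2 / (j : ℚ) < r → s ≤ r) := by
  intro c s
  have hjQ : (0 : ℚ) < j := by exact_mod_cast (by omega : 0 < j)
  obtain ⟨hc_lo, hc_hi⟩ : j * ((c : ℚ) - 1) < 2 * (m + 1) ∧ 2 * (m + 1) ≤ j * (c : ℚ) :=
    mul_ceil_div_bounds _ hjQ
  replace hc_lo : (j : ℤ) * (c - 1) < 2 * (m + 1) := by exact_mod_cast hc_lo
  replace hc_hi : 2 * (m + 1) ≤ (j : ℤ) * c := by exact_mod_cast hc_hi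
  set p : ℤ := if Even c then c - 1 else c - 2 with hp
  have hpc : p < c ∧ c ≤ p + 2 := by rw [hp]; split_ifs <;> omega
  obtain ⟨q, hq⟩ : Odd ((j : ℤ) * p) := (Int.odd_coe_nat j |>.2 hodd).mul (Int.odd_ite_even_sub c)
  have hs : s = (p : ℚ) / q := by
    have hqQ : ((j : ℚ) * p - 1) / 2 = q := by
      have : ((j : ℚ) * p) = 2 * q + 1 := by exact_mod_cast hq
      linarith
    rw [← hqQ]
    simp only [s, hp]
    split_ifs <;> push_cast <;> rfl
  have hp1 : 1 ≤ p := by nlinarith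
  have hqm : q ≤ m := by nlinarith
  have hmq : (m : ℤ) < j + q := by nlinarith
  have hpq : p ≤ q := by nlinarith
  obtain ⟨⟨hmem, hlt⟩, hleast⟩ :=
    isLeast_farey_gt (m := m) (a := 2) (b := j) (by omega) (by omega) (by omega) hpq hqm hmq
      (by linear_combination hq)
  rw [hs]
  push_cast at hmem hlt hleast
  exact ⟨hmem, hlt, fun r hr hjr => hleast ⟨hr, hjr⟩⟩

/-- If `2/j ∈ F_m` (`j` odd, `2 < j ≤ m`), then the immediate successor of `2/j`
in `F_m` is `(⌈2(m+1)/j⌉-1)/((j(⌈2(m+1)/j⌉-1)-1)/2)` when `⌈2(m+1)/j⌉` is even,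
and `(⌈2(m+1)/j⌉-2)/((j(⌈2(m+1)/j⌉-2)-1)/2)` when `⌈2(m+1)/j⌉` is odd. -/
theorem farey_succ_two_div (m j : ℕ) (hm : 1 < m) (hj : 2 < j) (hjm : j ≤ m)
    (hodd : Odd j) :
    (let c : ℤ := ⌈(2 * ((m : ℚ) + 1)) / j⌉
     let s : ℚ := if Even c then ((c : ℚ) - 1) / (((j : ℚ) * ((c : ℚ) - 1) - 1) / 2)
                  else ((c : ℚ) - 2) / (((j : ℚ) * ((c : ℚ) - 2) - 1) / 2)
     s ∈ Farey m ∧ 2 / (j : ℚ) < s ∧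
       ∀ r ∈ Farey m, 2 / (j : ℚ) < r → s ≤ r) :=
  farey_succ_two_div_general m j hj hjm hodd
end
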